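/- The Dirichlet series identity ∑_{δ,a ≥ 1} s_δ(a)/(δ^s a^t) = ζ(s+t−2)·ζ(s)·ζ(t)·ζ(t−1)/ζ(s+t) holds as an identity of formal double Dirichlet series, where s_δ(a) = ∑_{d|δ} J₂(d)·σ̄^d(a). -/

import Mathlib

/-!
Only the divisors `d` of `gcd(δ, a)` contribute to `s_δ(a)`, so
`s_δ(a) = ∑_{d ∣ gcd(δ,a)} J₂(d)·σ(a/d)`. Expanding `J₂ = μ * Id²` and writing `d = x·n`, the pair
`(n, x)` runs exactly over `n ∣ gcd(δ, a)`, `x ∣ gcd(δ, a)/n = gcd(δ/n, a/n)`, and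
`σ(a/(n x)) = ∑_{w ∣ a/(n x)} w` accounts for the factors `ζ(t)ζ(t−1)`.
-/

open Finset

/-- The second Jordan totient `J₂ = μ * Id²`, whose Dirichlet series is `ζ(s−2)/ζ(s)`. -/
def J2 (n : ℕ) : ℤ := ∑ d ∈ n.divisors, ArithmeticFunction.moebius d * ((n / d : ℕ) : ℤ) ^ 2

/-- `σ̄^d(a) = σ(a/d)` if `d ∣ a`, and `0` otherwise; its Dirichlet series in `a` is
`d^(−s)·ζ(s)ζ(s−1)`. -/
def sigmaBar (d a : ℕ) : ℤ := if d ∣ a then ∑ e ∈ (a / d).divisors, (e : ℤ) else 0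

/-- `s_δ(a) = ∑_{d ∣ δ} J₂(d)·σ̄^d(a)`. -/
def sLocal (δ a : ℕ) : ℤ := ∑ d ∈ δ.divisors, J2 d * sigmaBar d a

theorem Nat.sum_divisors_sum_divisorsAntidiagonal {M : Type*} [AddCommMonoid M]
    (f : ℕ → ℕ → M) (m : ℕ) :
    ∑ d ∈ m.divisors, ∑ p ∈ d.divisorsAntidiagonal, f p.1 p.2
      = ∑ n ∈ m.divisors, ∑ x ∈ (m / n).divisors, f x n := by
  rw [sum_sigma', sum_sigma']
  refine sum_nbij' (fun q => ⟨q.2.2, q.2.1⟩) (fun q => ⟨q.2 * q.1, (q.2, q.1)⟩)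
    ?_ ?_ ?_ (fun _ _ => rfl) fun _ _ => rfl
  · rintro ⟨d, x, n⟩ hq
    simp only [mem_sigma, Nat.mem_divisors, Nat.mem_divisorsAntidiagonal] at hq ⊢
    obtain ⟨⟨hdm, hm⟩, rfl, hd⟩ := hq
    have hnm : n ∣ m := (Dvd.intro_left x rfl).trans hdm
    exact ⟨⟨hnm, hm⟩, Nat.dvd_div_of_mul_dvd (mul_comm x n ▸ hdm),
      (Nat.div_ne_zero_iff_of_dvd hnm).mpr ⟨hm, right_ne_zero_of_mul hd⟩⟩
  · rintro ⟨n, x⟩ hq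
    simp only [mem_sigma, Nat.mem_divisors, Nat.mem_divisorsAntidiagonal] at hq ⊢
    obtain ⟨⟨hnm, hm⟩, hx, -⟩ := hq
    have hxn : x * n ∣ m := by
      rw [mul_comm]; exact (Nat.dvd_div_iff_mul_dvd hnm).mp hx
    exact ⟨⟨hxn, hm⟩, trivial, ne_zero_of_dvd_ne_zero hm hxn⟩
  · rintro ⟨d, x, n⟩ hq
    simp only [mem_sigma, Nat.mem_divisorsAntidiagonal] at hq
    obtain ⟨-, rfl, -⟩ := hq
    rfl

theorem sLocal_eq_sum_divisors_gcd {δ : ℕ} (hδ : δ ≠ 0) (a : ℕ) :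
    sLocal δ a = ∑ d ∈ (δ.gcd a).divisors, J2 d * ∑ e ∈ (a / d).divisors, (e : ℤ) := by
  have hfilter : δ.divisors.filter (· ∣ a) = (δ.gcd a).divisors := by
    ext d
    simp [Nat.dvd_gcd_iff, hδ]
  simp only [sLocal, sigmaBar, mul_ite, mul_zero, ← sum_filter, hfilter]

theorem J2_mul_eq_sum_divisorsAntidiagonal (n : ℕ) (c : ℕ → ℤ) :
    J2 n * c n
      = ∑ p ∈ n.divisorsAntidiagonal,
          ArithmeticFunction.moebius p.1 * (p.2 : ℤ) ^ 2 * c (p.1 * p.2) := by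
  rw [J2, ← Nat.sum_divisorsAntidiagonal fun x y =>
    (ArithmeticFunction.moebius x : ℤ) * (y : ℤ) ^ 2, sum_mul]
  exact sum_congr rfl fun p hp => by rw [(Nat.mem_divisorsAntidiagonal.mp hp).1]

/-- The right-hand side is the coefficient of `1/(δ^s a^t)` in
`ζ(s+t−2)·ζ(s)·ζ(t)·ζ(t−1)/ζ(s+t)`: convolving `ζ(s+t−2) = ∑_n n²/(n^s n^t)`,
`1/ζ(s+t) = ∑_x μ(x)/(x^s x^t)`, `ζ(s) = ∑_u 1/u^s`, `ζ(t−1) = ∑_w w/w^t` and `ζ(t) = ∑_v 1/v^t`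
means summing `n²·μ(x)·w` over all factorizations `δ = n·x·u`, `a = n·x·w·v`. -/
theorem sLocal_dirichlet_series_general (δ a : ℕ) (hδ : 0 < δ) :
    sLocal δ a
      = ∑ n ∈ (Nat.gcd δ a).divisors,
          ∑ x ∈ (Nat.gcd (δ / n) (a / n)).divisors,
            ∑ w ∈ (a / (n * x)).divisors,
              (n : ℤ) ^ 2 * ArithmeticFunction.moebius x * (w : ℤ) := by
  rw [sLocal_eq_sum_divisors_gcd hδ.ne', sum_congr rfl fun d _ =>
    J2_mul_eq_sum_divisorsAntidiagonal d fun d => ∑ e ∈ (a / d).divisors, (e : ℤ),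
    Nat.sum_divisors_sum_divisorsAntidiagonal fun x n =>
      ArithmeticFunction.moebius x * (n : ℤ) ^ 2 * ∑ e ∈ (a / (x * n)).divisors, (e : ℤ)]
  refine sum_congr rfl fun n hmem => ?_
  have hn : n ∣ δ.gcd a := Nat.dvd_of_mem_divisors hmem
  rw [Nat.gcd_div (hn.trans (Nat.gcd_dvd_left δ a)) (hn.trans (Nat.gcd_dvd_right δ a))]
  refine sum_congr rfl fun x _ => ?_
  rw [mul_sum, mul_comm x n]
  exact sum_congr rfl fun w _ => by ring

/-- The formal double Dirichlet series identity
`∑_{δ,a} s_δ(a)/(δ^s a^t) = ζ(s+t−2)·ζ(s)·ζ(t)·ζ(t−1)/ζ(s+t)`, stated as an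
identity of all coefficients: the coefficient of `1/(δ^s a^t)` on the right is
obtained by convolving `ζ(s+t−2) = ∑_n n²/(n^s n^t)`, `1/ζ(s+t) = ∑_x μ(x)/(x^s x^t)`,
`ζ(s) = ∑_u 1/u^s`, `ζ(t−1) = ∑_w w/w^t` and `ζ(t) = ∑_v 1/v^t`, i.e. summing
`n²·μ(x)·w` over all factorizations `δ = n·x·u`, `a = n·x·w·v`. -/
theorem sLocal_dirichlet_series (δ a : ℕ) (hδ : 0 < δ) (ha : 0 < a) :
    sLocal δ a
      = ∑ n ∈ (Nat.gcd δ a).divisors,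
          ∑ x ∈ (Nat.gcd (δ / n) (a / n)).divisors,
            ∑ w ∈ (a / (n * x)).divisors,
              (n : ℤ) ^ 2 * ArithmeticFunction.moebius x * (w : ℤ) :=
  sLocal_dirichlet_series_general δ a hδ
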